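/- arXiv:1203.6462 — 5 statements merged into one kernel-verified Lean document; each statement's English description precedes it below -/
import Mathlib

section
/- For all b ≥ 1, the integer complexity of 3^b equals 3b. -/
/-- `CanRepr n k` : `n` can be written as an expression in `1, +, ·` using `k` ones. -/
inductive CanRepr : ℕ → ℕ → Prop
  | one : CanRepr 1 1
  | add {a b j k : ℕ} : CanRepr a j → CanRepr b k → CanRepr (a + b) (j + k)
  | mul {a b j k : ℕ} : CanRepr a j → CanRepr b k → CanRepr (a * b) (j + k)

/-- Integer complexity `‖n‖`: least number of ones in an expression for `n`. -/
noncomputable def cpx (n : ℕ) : ℕ := sInf {k | CanRepr n k}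

lemma cube_add_one {b k : ℕ} (hb : 1 ≤ b) (hk : 1 ≤ k) (h2 : b ^ 3 ≤ 3 ^ k) :
    (1 + b) ^ 3 ≤ 3 ^ (1 + k) := by
  rcases Nat.lt_or_ge b 3 with hb3 | hb3
  · interval_cases b
    · -- b = 1 : 8 ≤ 3^(1+k), k ≥ 1
      calc (1 + 1) ^ 3 = 8 := by norm_num
        _ ≤ 3 ^ (1 + 1) := by norm_num
        _ ≤ 3 ^ (1 + k) := Nat.pow_le_pow_right (by norm_num) (by omega)
    · -- b = 2 : need k ≥ 2
      have hk2 : 2 ≤ k := by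
        by_contra h
        have : k = 1 := by omega
        simp [this] at h2
      calc (1 + 2) ^ 3 = 27 := by norm_num
        _ ≤ 3 ^ (1 + 2) := by norm_num
        _ ≤ 3 ^ (1 + k) := Nat.pow_le_pow_right (by norm_num) (by omega)
  · have e1 : 3 * b ^ 2 ≤ b ^ 3 := by
      calc 3 * b ^ 2 ≤ b * b ^ 2 := Nat.mul_le_mul_right _ hb3
        _ = b ^ 3 := by ring
    have e2 : 3 * b ≤ b ^ 2 := by
      calc 3 * b ≤ b * b := Nat.mul_le_mul_right _ hb3
        _ = b ^ 2 := by ring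
    have e3 : 1 ≤ b ^ 2 := Nat.one_le_pow _ _ (by omega)
    have h3 : (1 + b) ^ 3 ≤ 3 * b ^ 3 := by nlinarith [e1, e2, e3]
    calc (1 + b) ^ 3 ≤ 3 * b ^ 3 := h3
      _ ≤ 3 * 3 ^ k := by omega
      _ = 3 ^ (1 + k) := by rw [pow_add]; ring

lemma cube_add {a b j k : ℕ} (ha : 1 ≤ a) (hb : 1 ≤ b) (hj : 1 ≤ j) (hk : 1 ≤ k)
    (h1 : a ^ 3 ≤ 3 ^ j) (h2 : b ^ 3 ≤ 3 ^ k) : (a + b) ^ 3 ≤ 3 ^ (j + k) := by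
  rcases Nat.lt_or_ge j 2 with hj2 | hj2
  · have hj1 : j = 1 := by omega
    have ha1 : a = 1 := by
      by_contra h
      have h2a : 2 ≤ a := by omega
      have : 8 ≤ a ^ 3 := by
        calc (8:ℕ) = 2 ^ 3 := by norm_num
          _ ≤ a ^ 3 := Nat.pow_le_pow_left h2a 3
      simp [hj1] at h1
      omega
    subst hj1; subst ha1
    exact cube_add_one hb hk h2
  rcases Nat.lt_or_ge k 2 with hk2 | hk2
  · have hk1 : k = 1 := by omega
    have hb1 : b = 1 := by
      by_contra h
      have h2b : 2 ≤ b := by omega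
      have : 8 ≤ b ^ 3 := by
        calc (8:ℕ) = 2 ^ 3 := by norm_num
          _ ≤ b ^ 3 := Nat.pow_le_pow_left h2b 3
      simp [hk1] at h2
      omega
    subst hk1; subst hb1
    rw [add_comm a 1, add_comm j 1]
    exact cube_add_one ha hj h1
  -- j, k ≥ 2
  rcases le_total a b with hab | hab
  · calc (a + b) ^ 3 ≤ (2 * b) ^ 3 := Nat.pow_le_pow_left (by omega) 3
      _ = 8 * b ^ 3 := by ring
      _ ≤ 9 * 3 ^ k := by omega
      _ = 3 ^ (2 + k) := by rw [pow_add]; ring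
      _ ≤ 3 ^ (j + k) := Nat.pow_le_pow_right (by norm_num) (by omega)
  · calc (a + b) ^ 3 ≤ (2 * a) ^ 3 := Nat.pow_le_pow_left (by omega) 3
      _ = 8 * a ^ 3 := by ring
      _ ≤ 9 * 3 ^ j := by omega
      _ = 3 ^ (j + 2) := by rw [pow_add]; ring
      _ ≤ 3 ^ (j + k) := Nat.pow_le_pow_right (by norm_num) (by omega)

lemma canRepr_bound {n k : ℕ} (h : CanRepr n k) : 1 ≤ n ∧ 1 ≤ k ∧ n ^ 3 ≤ 3 ^ k := by
  induction h with
  | one => norm_num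
  | add h1 h2 ih1 ih2 =>
    obtain ⟨ha, hj, hc1⟩ := ih1
    obtain ⟨hb, hk, hc2⟩ := ih2
    exact ⟨by omega, by omega, cube_add ha hb hj hk hc1 hc2⟩
  | mul h1 h2 ih1 ih2 =>
    obtain ⟨ha, hj, hc1⟩ := ih1
    obtain ⟨hb, hk, hc2⟩ := ih2
    refine ⟨Nat.one_le_iff_ne_zero.mpr (by positivity), by omega, ?_⟩
    calc (_ * _) ^ 3 = _ ^ 3 * _ ^ 3 := by ring
      _ ≤ 3 ^ _ * 3 ^ _ := Nat.mul_le_mul hc1 hc2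
      _ = 3 ^ (_ + _) := (pow_add 3 _ _).symm

lemma canRepr_three : CanRepr 3 3 := by
  have h2 : CanRepr 2 2 := CanRepr.add CanRepr.one CanRepr.one
  exact CanRepr.add h2 CanRepr.one

lemma canRepr_pow_three (b : ℕ) (hb : 1 ≤ b) : CanRepr (3 ^ b) (3 * b) := by
  induction b with
  | zero => omega
  | succ n ih =>
    rcases Nat.eq_or_lt_of_le hb with h | h
    · simpa [← h] using canRepr_three
    · have hn : 1 ≤ n := by omega
      have := CanRepr.mul (ih hn) canRepr_three
      have e1 : 3 ^ n * 3 = 3 ^ (n + 1) := by rw [pow_succ]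
      have e2 : 3 * n + 3 = 3 * (n + 1) := by ring
      rwa [e1, e2] at this

theorem cpx_pow_three (b : ℕ) (hb : 1 ≤ b) : cpx (3 ^ b) = 3 * b := by
  have hmem : CanRepr (3 ^ b) (3 * b) := canRepr_pow_three b hb
  apply le_antisymm
  · exact Nat.sInf_le hmem
  · apply le_csInf ⟨3 * b, hmem⟩
    intro k hk
    have hk' : CanRepr (3 ^ b) k := hk
    obtain ⟨_, _, hc⟩ := canRepr_bound hk'
    have : 3 ^ (3 * b) ≤ 3 ^ k := by
      calc 3 ^ (3 * b) = (3 ^ b) ^ 3 := by rw [← pow_mul, mul_comm]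
        _ ≤ 3 ^ k := hc
    exact (Nat.pow_le_pow_iff_right (by norm_num)).mp this
end

section
/- For all k ≥ 0: E(3k+2) = 2·3^k, E(3k+3) = 3·3^k, and E(3k+4) = 4·3^k, where E(n) is the largest integer of complexity n. -/
/-- `E n` : the largest integer of complexity `n`. -/
noncomputable def E (n : ℕ) : ℕ := sSup {m | cpx m = n}

/-- The largest integer expressible with `k` ones. -/
def f : ℕ → ℕ
  | 0 => 0
  | 1 => 1
  | 2 => 2
  | 3 => 3
  | 4 => 4
  | (n+5) => 3 * f (n+2)

lemma f_lt_succ : ∀ k, f (k+1) < f (k+2) := by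
  intro k
  induction k using Nat.strong_induction_on with
  | _ k ih =>
    match k with
    | 0 => decide
    | 1 => decide
    | 2 => decide
    | 3 => decide
    | n+4 =>
      have h : f (n+2) < f (n+3) := ih (n+1) (by omega)
      show 3 * f (n+2) < 3 * f (n+3)
      omega

lemma f_mono {j k : ℕ} (h : j ≤ k) : f (j+1) ≤ f (k+1) := by
  have : StrictMono (fun n => f (n+1)) := strictMono_nat_of_lt_succ f_lt_succ
  exact this.monotone h

lemma f_strict {j k : ℕ} (h1 : 1 ≤ j) (h2 : j < k) : f j < f k := by
  have : StrictMono (fun n => f (n+1)) := strictMono_nat_of_lt_succ f_lt_succ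
  obtain ⟨j', rfl⟩ : ∃ j', j = j' + 1 := ⟨j - 1, by omega⟩
  obtain ⟨k', rfl⟩ : ∃ k', k = k' + 1 := ⟨k - 1, by omega⟩
  exact this (by omega)

lemma f_rec (k : ℕ) (h : 2 ≤ k) : f (k + 3) = 3 * f k := by
  obtain ⟨n, rfl⟩ : ∃ n, k = n + 2 := ⟨k - 2, by omega⟩
  rfl

lemma f_mul : ∀ n j k, j + k ≤ n → 1 ≤ j → 1 ≤ k → f j * f k ≤ f (j + k) := by
  intro n
  induction n using Nat.strong_induction_on with
  | _ n ih =>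
    intro j k hn hj hk
    by_cases hj5 : 5 ≤ j
    · have h1 : f j = 3 * f (j - 3) := by
        have := f_rec (j - 3) (by omega)
        rw [show j - 3 + 3 = j by omega] at this
        omega
      have h2 : f (j - 3) * f k ≤ f (j - 3 + k) := by
        refine ih (n-1) (by omega) _ _ (by omega) (by omega) hk
      have h3 : f (j + k) = 3 * f (j - 3 + k) := by
        have := f_rec (j - 3 + k) (by omega)
        rw [show j - 3 + k + 3 = j + k by omega] at this
        omega
      calc f j * f k = 3 * (f (j-3) * f k) := by rw [h1]; ring
        _ ≤ 3 * f (j - 3 + k) := by omega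
        _ = f (j + k) := h3.symm
    · by_cases hk5 : 5 ≤ k
      · have h1 : f k = 3 * f (k - 3) := by
          have := f_rec (k - 3) (by omega)
          rw [show k - 3 + 3 = k by omega] at this
          omega
        have h2 : f j * f (k - 3) ≤ f (j + (k - 3)) := by
          refine ih (n-1) (by omega) _ _ (by omega) hj (by omega)
        have h3 : f (j + k) = 3 * f (j + (k - 3)) := by
          have := f_rec (j + (k - 3)) (by omega)
          rw [show j + (k - 3) + 3 = j + k by omega] at this
          omega
        calc f j * f k = 3 * (f j * f (k-3)) := by rw [h1]; ring
          _ ≤ 3 * f (j + (k - 3)) := by omega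
          _ = f (j + k) := h3.symm
      · interval_cases j <;> interval_cases k <;> decide

lemma f_add : ∀ n j k, j + k ≤ n → 1 ≤ j → 1 ≤ k → f j + f k ≤ f (j + k) := by
  intro n
  induction n using Nat.strong_induction_on with
  | _ n ih =>
    intro j k hn hj hk
    by_cases hj5 : 5 ≤ j
    · have h1 : f j = 3 * f (j - 3) := by
        have := f_rec (j - 3) (by omega)
        rw [show j - 3 + 3 = j by omega] at this
        omega
      have h2 : f (j - 3) + f k ≤ f (j - 3 + k) := by
        refine ih (n-1) (by omega) _ _ (by omega) (by omega) hk
      have h3 : f (j + k) = 3 * f (j - 3 + k) := by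
        have := f_rec (j - 3 + k) (by omega)
        rw [show j - 3 + k + 3 = j + k by omega] at this
        omega
      omega
    · by_cases hk5 : 5 ≤ k
      · have h1 : f k = 3 * f (k - 3) := by
          have := f_rec (k - 3) (by omega)
          rw [show k - 3 + 3 = k by omega] at this
          omega
        have h2 : f j + f (k - 3) ≤ f (j + (k - 3)) := by
          refine ih (n-1) (by omega) _ _ (by omega) hj (by omega)
        have h3 : f (j + k) = 3 * f (j + (k - 3)) := by
          have := f_rec (j + (k - 3)) (by omega)
          rw [show j + (k - 3) + 3 = j + k by omega] at this
          omega
        omega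
      · interval_cases j <;> interval_cases k <;> decide

lemma canRepr_pos {m k : ℕ} (h : CanRepr m k) : 1 ≤ k := by
  induction h with
  | one => exact le_refl 1
  | add _ _ h1 h2 => omega
  | mul _ _ h1 h2 => omega

lemma le_f {m k : ℕ} (h : CanRepr m k) : m ≤ f k := by
  induction h with
  | one => exact le_refl 1
  | @add a b j k ha hb iha ihb =>
    have := f_add (j + k) j k (le_refl _) (canRepr_pos ha) (canRepr_pos hb)
    omega
  | @mul a b j k ha hb iha ihb =>
    have := f_mul (j + k) j k (le_refl _) (canRepr_pos ha) (canRepr_pos hb)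
    calc a * b ≤ f j * f k := Nat.mul_le_mul iha ihb
      _ ≤ f (j + k) := this

lemma canRepr_f : ∀ k, 1 ≤ k → CanRepr (f k) k := by
  intro k
  induction k using Nat.strong_induction_on with
  | _ k ih =>
    intro hk
    match k with
    | 0 => omega
    | 1 => exact CanRepr.one
    | 2 => exact CanRepr.add CanRepr.one CanRepr.one
    | 3 => exact canRepr_three
    | 4 => exact CanRepr.add (CanRepr.add CanRepr.one CanRepr.one) (CanRepr.add CanRepr.one CanRepr.one)
    | n+5 =>
      have h := ih (n+2) (by omega) (by omega)
      have : CanRepr (f (n+2) * 3) (n + 2 + 3) := CanRepr.mul h canRepr_three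
      have heq : f (n+5) = f (n+2) * 3 := by show 3 * f (n+2) = _; ring
      rw [heq, show n + 5 = n + 2 + 3 by omega]
      exact this

lemma cpx_f (k : ℕ) (hk : 1 ≤ k) : cpx (f k) = k := by
  have hmem : k ∈ {j | CanRepr (f k) j} := canRepr_f k hk
  apply le_antisymm
  · exact Nat.sInf_le hmem
  · by_contra h
    push_neg at h
    have hne : {j | CanRepr (f k) j}.Nonempty := ⟨k, hmem⟩
    have hin := Nat.sInf_mem hne
    have h1 : 1 ≤ sInf {j | CanRepr (f k) j} := canRepr_pos hin
    have h2 : f k ≤ f (sInf {j | CanRepr (f k) j}) := le_f hin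
    have h3 : f (sInf {j | CanRepr (f k) j}) < f k := f_strict h1 h
    omega

lemma E_eq_f (n : ℕ) (hn : 1 ≤ n) : E n = f n := by
  have hub : ∀ m ∈ {m | cpx m = n}, m ≤ f n := by
    intro m hm
    simp only [Set.mem_setOf_eq] at hm
    rcases Set.eq_empty_or_nonempty {k | CanRepr m k} with he | hne
    · exfalso
      have : cpx m = 0 := by
        unfold cpx
        rw [he, Nat.sInf_empty]
      omega
    · have hin := Nat.sInf_mem hne
      rw [show sInf {k | CanRepr m k} = cpx m from rfl, hm] at hin
      exact le_f hin
  have hmem : f n ∈ {m | cpx m = n} := cpx_f n hn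
  apply le_antisymm
  · exact csSup_le ⟨f n, hmem⟩ hub
  · exact le_csSup ⟨f n, hub⟩ hmem

lemma f_formula (k : ℕ) :
    f (3 * k + 2) = 2 * 3 ^ k ∧ f (3 * k + 3) = 3 * 3 ^ k ∧ f (3 * k + 4) = 4 * 3 ^ k := by
  induction k with
  | zero => refine ⟨rfl, rfl, rfl⟩
  | succ k ih =>
    obtain ⟨h1, h2, h3⟩ := ih
    refine ⟨?_, ?_, ?_⟩
    · rw [show 3 * (k+1) + 2 = (3*k+2) + 3 by ring, f_rec _ (by omega), h1]; ring
    · rw [show 3 * (k+1) + 3 = (3*k+3) + 3 by ring, f_rec _ (by omega), h2]; ring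
    · rw [show 3 * (k+1) + 4 = (3*k+4) + 3 by ring, f_rec _ (by omega), h3]; ring

theorem E_formula (k : ℕ) :
    E (3 * k + 2) = 2 * 3 ^ k ∧ E (3 * k + 3) = 3 * 3 ^ k ∧ E (3 * k + 4) = 4 * 3 ^ k := by
  obtain ⟨h1, h2, h3⟩ := f_formula k
  exact ⟨by rw [E_eq_f _ (by omega), h1], by rw [E_eq_f _ (by omega), h2],
    by rw [E_eq_f _ (by omega), h3]⟩
end

section
/- For all n ≥ 1, A(3n) ≤ A(n) + B(n) + 1, where A(n) = ‖2^n − 1‖ − 2n and B(n) = ‖2^n + 1‖ − 2n. -/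
/-- `A n = ‖2^n - 1‖ - 2n` as an integer. -/
noncomputable def A (n : ℕ) : ℤ := (cpx (2 ^ n - 1) : ℤ) - 2 * n

/-- `B n = ‖2^n + 1‖ - 2n` as an integer. -/
noncomputable def B (n : ℕ) : ℤ := (cpx (2 ^ n + 1) : ℤ) - 2 * n

lemma canRepr_exists (n : ℕ) (hn : 1 ≤ n) : ∃ k, CanRepr n k := by
  induction n with
  | zero => omega
  | succ m ih =>
    rcases Nat.eq_or_lt_of_le hn with h | h
    · exact ⟨1, h ▸ CanRepr.one⟩
    · obtain ⟨k, hk⟩ := ih (by omega)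
      exact ⟨k + 1, CanRepr.add hk CanRepr.one⟩

lemma cpx_spec (n : ℕ) (hn : 1 ≤ n) : CanRepr n (cpx n) :=
  Nat.sInf_mem (canRepr_exists n hn)

lemma cpx_le {n k : ℕ} (h : CanRepr n k) : cpx n ≤ k := Nat.sInf_le h

lemma canRepr_two_pow (n : ℕ) (hn : 1 ≤ n) : CanRepr (2 ^ n) (2 * n) := by
  induction n with
  | zero => omega
  | succ m ih =>
    rcases Nat.eq_or_lt_of_le hn with h | h
    · have hm : m = 0 := by omega
      subst hm
      show CanRepr 2 2
      exact CanRepr.add CanRepr.one CanRepr.one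
    · have h2 : CanRepr 2 2 := CanRepr.add CanRepr.one CanRepr.one
      have := CanRepr.mul h2 (ih (by omega))
      have he : 2 * 2 ^ m = 2 ^ (m + 1) := by ring
      have he2 : 2 + 2 * m = 2 * (m + 1) := by ring
      rwa [he, he2] at this

theorem A_three_mul (n : ℕ) (hn : 1 ≤ n) : A (3 * n) ≤ A n + B n + 1 := by
  have hx : 2 ≤ 2 ^ n := by
    calc 2 = 2 ^ 1 := rfl
    _ ≤ 2 ^ n := Nat.pow_le_pow_right (by norm_num) hn
  have ha : CanRepr (2 ^ n - 1) (cpx (2 ^ n - 1)) := cpx_spec _ (by omega)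
  have hb : CanRepr (2 ^ n + 1) (cpx (2 ^ n + 1)) := cpx_spec _ (by omega)
  have hrep : CanRepr ((2 ^ n - 1) * ((2 ^ n + 1) * 2 ^ n + 1))
      (cpx (2 ^ n - 1) + (cpx (2 ^ n + 1) + 2 * n + 1)) :=
    CanRepr.mul ha (CanRepr.add (CanRepr.mul hb (canRepr_two_pow n hn)) CanRepr.one)
  have hid : (2 ^ n - 1) * ((2 ^ n + 1) * 2 ^ n + 1) = 2 ^ (3 * n) - 1 := by
    obtain ⟨y, hy⟩ : ∃ y, 2 ^ n = y + 1 := ⟨2 ^ n - 1, by omega⟩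
    have h3 : 2 ^ (3 * n) = (2 ^ n) ^ 3 := by rw [← pow_mul, mul_comm]
    rw [h3, hy]
    have : (y + 1) ^ 3 = (y ^ 3 + 3 * y ^ 2 + 3 * y) + 1 := by ring
    rw [this]
    simp
    ring
  rw [hid] at hrep
  have hle : cpx (2 ^ (3 * n) - 1) ≤ cpx (2 ^ n - 1) + (cpx (2 ^ n + 1) + 2 * n + 1) :=
    cpx_le hrep
  simp only [A, B]
  push_cast
  have : (cpx (2 ^ (3 * n) - 1) : ℤ) ≤ cpx (2 ^ n - 1) + (cpx (2 ^ n + 1) + 2 * n + 1) := by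
    exact_mod_cast hle
  push_cast at this
  linarith
end

section
/- For every integer n > 1, ‖2^n − 1‖ ≤ 2n + ⌊log₂ n⌋ + H(n) − 3, where H(n) is the number of 1s in the binary representation of n. -/
lemma canRepr_two : CanRepr 2 2 := CanRepr.add .one .one

lemma canRepr_pow2 : ∀ n, 1 ≤ n → CanRepr (2 ^ n) (2 * n) := by
  intro n hn
  induction n with
  | zero => omega
  | succ m ih =>
    rcases Nat.eq_zero_or_pos m with h | hm
    · subst h; simpa using canRepr_two
    · have := CanRepr.mul (ih hm) canRepr_two
      have e1 : 2 ^ m * 2 = 2 ^ (m + 1) := by ring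
      have e2 : 2 * m + 2 = 2 * (m + 1) := by ring
      rwa [e1, e2] at this

lemma log_aux (m r : ℕ) (hm : 1 ≤ m) (hr : r ≤ 1) :
    Nat.log 2 (2 * m + r) = Nat.log 2 m + 1 := by
  have h1 : 2 ^ Nat.log 2 m ≤ m := Nat.pow_log_le_self 2 (by omega)
  have h2 : m < 2 ^ (Nat.log 2 m + 1) := Nat.lt_pow_succ_log_self (by norm_num) m
  apply Nat.log_eq_of_pow_le_of_lt_pow <;> simp only [pow_succ] at * <;> omega

lemma log_aux0 (m : ℕ) (hm : 1 ≤ m) : Nat.log 2 (2 * m) = Nat.log 2 m + 1 := by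
  simpa using log_aux m 0 hm (by omega)

lemma digits_aux (m r : ℕ) (hm : 1 ≤ m) (hr : r ≤ 1) :
    (Nat.digits 2 (2 * m + r)).sum = r + (Nat.digits 2 m).sum := by
  rw [Nat.digits_def' (by norm_num : 1 < 2) (by omega)]
  have e1 : (2 * m + r) % 2 = r := by omega
  have e2 : (2 * m + r) / 2 = m := by omega
  rw [e1, e2, List.sum_cons]

lemma digits_aux0 (m : ℕ) (hm : 1 ≤ m) :
    (Nat.digits 2 (2 * m)).sum = (Nat.digits 2 m).sum := by
  simpa using digits_aux m 0 hm (by omega)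

lemma sq_sub_one (a : ℕ) (ha : 1 ≤ a) : (a - 1) * (a + 1) = a * a - 1 := by
  have h1 : a * (a + 1) = a * a + a := by ring
  have h2 : (a - 1) * (a + 1) = a * (a + 1) - (a + 1) := by
    rw [Nat.sub_mul, one_mul]
  have h3 : a + 1 ≤ a * (a + 1) := Nat.le_mul_of_pos_left _ (by omega)
  omega

lemma key : ∀ n, 2 ≤ n → ∃ k, CanRepr (2 ^ n - 1) k ∧
    k + 3 = 2 * n + Nat.log 2 n + (Nat.digits 2 n).sum := by
  intro n
  induction n using Nat.strong_induction_on with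
  | _ n IH =>
  intro hn
  rcases Nat.even_or_odd n with ⟨m, hm⟩ | ⟨m, hm⟩
  · -- n = 2 * m
    have hm' : n = 2 * m := by omega
    subst hm'
    rcases Nat.eq_or_lt_of_le (show 1 ≤ m by omega) with h | h
    · -- n = 2
      obtain rfl : m = 1 := h.symm
      refine ⟨3, ?_, ?_⟩
      · have h3 : CanRepr (2 + 1) (2 + 1) := CanRepr.add canRepr_two .one
        have e : 2 ^ (2 * 1) - 1 = 2 + 1 := by norm_num
        rwa [e]
      · rw [log_aux0 1 le_rfl, digits_aux0 1 le_rfl]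
        norm_num [Nat.log_one_right]
    · -- m ≥ 2
      have hm2 : 2 ≤ m := h
      obtain ⟨k, hk, hke⟩ := IH m (by omega) hm2
      have hp : CanRepr (2 ^ m + 1) (2 * m + 1) :=
        CanRepr.add (canRepr_pow2 m (by omega)) .one
      have hmul := CanRepr.mul hk hp
      refine ⟨k + (2 * m + 1), ?_, ?_⟩
      · have hpow : 1 ≤ 2 ^ m := Nat.one_le_two_pow
        have e : (2 ^ m - 1) * (2 ^ m + 1) = 2 ^ (2 * m) - 1 := by
          rw [sq_sub_one _ hpow, two_mul, pow_add]
        rwa [e] at hmul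
      · rw [log_aux0 m (by omega), digits_aux0 m (by omega)]
        omega
  · -- n = 2 * m + 1
    subst hm
    rcases Nat.eq_or_lt_of_le (show 1 ≤ m by omega) with h | h
    · -- n = 3
      obtain rfl : m = 1 := h.symm
      refine ⟨6, ?_, ?_⟩
      · have h3 : CanRepr 3 3 := CanRepr.add canRepr_two .one
        have h7 : CanRepr (2 * 3 + 1) (2 + 3 + 1) :=
          CanRepr.add (CanRepr.mul canRepr_two h3) .one
        have e : 2 ^ (2 * 1 + 1) - 1 = 2 * 3 + 1 := by norm_num
        rwa [e]
      · rw [log_aux 1 1 le_rfl le_rfl, digits_aux 1 1 le_rfl le_rfl]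
        norm_num [Nat.log_one_right]
    · -- m ≥ 2, use result for 2 * m
      obtain ⟨k, hk, hke⟩ := IH (2 * m) (by omega) (by omega)
      have hrep := CanRepr.add (CanRepr.mul canRepr_two hk) .one
      refine ⟨2 + k + 1, ?_, ?_⟩
      · have hpow : 1 ≤ 2 ^ (2 * m) := Nat.one_le_two_pow
        have e : 2 * (2 ^ (2 * m) - 1) + 1 = 2 ^ (2 * m + 1) - 1 := by
          have : 2 ^ (2 * m + 1) = 2 * 2 ^ (2 * m) := by rw [pow_succ]; ring
          omega
        rwa [e] at hrep
      · rw [log_aux0 m (by omega), digits_aux0 m (by omega)] at hke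
        rw [log_aux m 1 (by omega) (by omega), digits_aux m 1 (by omega) (by omega)]
        omega

theorem cpx_mersenne_le (n : ℕ) (hn : 1 < n) :
    (cpx (2 ^ n - 1) : ℤ) ≤ 2 * n + Nat.log 2 n + (Nat.digits 2 n).sum - 3 := by
  obtain ⟨k, hk, hke⟩ := key n hn
  have h1 : cpx (2 ^ n - 1) ≤ k := Nat.sInf_le hk
  omega
end

section
/- The logarithmic complexities of numbers of the form 2^a·3^b are dense in the interval [3, 2/log₃2], assuming ‖2^a·3^b‖ = 2a + 3b for all a + b > 0. Precisely: under this assumption, for every subinterval [u,v] ⊆ [3, 2/log₃2] with u < v, there exist a, b ≥ 0 with a + b > 0 such that ‖2^a 3^b‖ / log₃(2^a 3^b) ∈ [u, v]. -/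
theorem logb_cpx_dense
    (h : ∀ a b : ℕ, 0 < a + b → cpx (2 ^ a * 3 ^ b) = 2 * a + 3 * b)
    (u v : ℝ) (hu : 3 ≤ u) (hv : v ≤ 2 / Real.logb 3 2) (huv : u < v) :
    ∃ a b : ℕ, 0 < a + b ∧
      u ≤ (cpx (2 ^ a * 3 ^ b) : ℝ) / Real.logb 3 ((2 : ℕ) ^ a * 3 ^ b) ∧
      (cpx (2 ^ a * 3 ^ b) : ℝ) / Real.logb 3 ((2 : ℕ) ^ a * 3 ^ b) ≤ v := by
  set L := Real.logb 3 2 with hLdef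
  have hL0 : 0 < L := Real.logb_pos (by norm_num) (by norm_num)
  have h3L : 3 * L < 2 := by
    have h89 : Real.log 8 < Real.log 9 := Real.log_lt_log (by norm_num) (by norm_num)
    have e8 : Real.log 8 = 3 * Real.log 2 := by
      rw [show (8:ℝ) = 2^3 by norm_num, Real.log_pow]; push_cast; ring
    have e9 : Real.log 9 = 2 * Real.log 3 := by
      rw [show (9:ℝ) = 3^2 by norm_num, Real.log_pow]; push_cast; ring
    have hlog3 : (0:ℝ) < Real.log 3 := Real.log_pos (by norm_num)
    rw [hLdef, Real.logb, mul_div_assoc', div_lt_iff₀ hlog3]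
    linarith
  -- u*L < 2 and v*L ≤ 2
  have hvL : v * L ≤ 2 := by
    rw [le_div_iff₀ hL0] at hv; linarith [hv]
  have huL : u * L < 2 := by nlinarith
  -- the main reduction
  have main : ∀ a b : ℕ, 0 < b →
      u * ((a:ℝ) * L + b) ≤ 2 * a + 3 * b →
      (2 * a + 3 * b : ℝ) ≤ v * ((a:ℝ) * L + b) →
      (∃ a b : ℕ, 0 < a + b ∧
        u ≤ (cpx (2 ^ a * 3 ^ b) : ℝ) / Real.logb 3 ((2 : ℕ) ^ a * 3 ^ b) ∧
        (cpx (2 ^ a * 3 ^ b) : ℝ) / Real.logb 3 ((2 : ℕ) ^ a * 3 ^ b) ≤ v) := by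
    intro a b hb h1 h2
    have hab : 0 < a + b := by omega
    have hD : (0:ℝ) < (a:ℝ) * L + b := by
      have : (1:ℝ) ≤ (b:ℝ) := by exact_mod_cast hb
      have : (0:ℝ) ≤ (a:ℝ) * L := by positivity
      linarith
    have hlogb : Real.logb 3 (((2:ℕ):ℝ) ^ a * (3:ℝ) ^ b) = (a:ℝ) * L + b := by
      push_cast
      rw [Real.logb_mul (by positivity) (by positivity), Real.logb_pow, Real.logb_pow]
      simp [hLdef]
    refine ⟨a, b, hab, ?_, ?_⟩
    · rw [h a b hab, hlogb, le_div_iff₀ hD]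
      push_cast
      linarith
    · rw [h a b hab, hlogb, div_le_iff₀ hD]
      push_cast
      linarith
  -- lower threshold
  have h2uL : (0:ℝ) < 2 - u * L := by linarith
  set tu : ℝ := (u - 3) / (2 - u * L) with htu
  have htu0 : 0 ≤ tu := div_nonneg (by linarith) (by linarith)
  -- pick an upper bound T with tu < T, and such that q < T gives the upper inequality
  rcases lt_or_ge (v * L) 2 with hvL2 | hvL2
  · -- v * L < 2 : use tv = (v-3)/(2-vL)
    have h2vL : (0:ℝ) < 2 - v * L := by linarith
    have hv3 : (3:ℝ) < v := lt_of_le_of_lt hu huv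
    set tv : ℝ := (v - 3) / (2 - v * L) with htv
    have htt : tu < tv := by
      rw [htu, htv, div_lt_div_iff₀ h2uL h2vL]
      nlinarith
    obtain ⟨q, hq1, hq2⟩ := exists_rat_btwn htt
    have hq0 : (0:ℝ) < (q:ℝ) := lt_of_le_of_lt htu0 hq1
    have hq0' : 0 < q := by exact_mod_cast hq0
    have hnum : 0 < q.num := Rat.num_pos.mpr hq0'
    set a : ℕ := q.num.toNat with ha
    set b : ℕ := q.den with hb
    have hbpos : 0 < b := q.pos
    have hcast : (q:ℝ) = (a:ℝ) / (b:ℝ) := by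
      rw [Rat.cast_def, ha, hb]
      congr 1
      exact_mod_cast (Int.toNat_of_nonneg hnum.le).symm
    have hbR : (0:ℝ) < (b:ℝ) := by exact_mod_cast hbpos
    refine main a b hbpos ?_ ?_
    · rw [hcast, htu, div_lt_div_iff₀ h2uL hbR] at hq1
      nlinarith
    · rw [hcast, htv, div_lt_div_iff₀ hbR h2vL] at hq2
      nlinarith
  · -- v * L ≥ 2 : upper bound holds automatically; pick any q > tu
    obtain ⟨q, hq1, hq2⟩ := exists_rat_btwn (lt_add_one tu)
    have hq0 : (0:ℝ) < (q:ℝ) := lt_of_le_of_lt htu0 hq1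
    have hq0' : 0 < q := by exact_mod_cast hq0
    have hnum : 0 < q.num := Rat.num_pos.mpr hq0'
    set a : ℕ := q.num.toNat with ha
    set b : ℕ := q.den with hb
    have hbpos : 0 < b := q.pos
    have hcast : (q:ℝ) = (a:ℝ) / (b:ℝ) := by
      rw [Rat.cast_def, ha, hb]
      congr 1
      exact_mod_cast (Int.toNat_of_nonneg hnum.le).symm
    have hbR : (0:ℝ) < (b:ℝ) := by exact_mod_cast hbpos
    have haR : (0:ℝ) ≤ (a:ℝ) := Nat.cast_nonneg a
    refine main a b hbpos ?_ ?_
    · rw [hcast, htu, div_lt_div_iff₀ h2uL hbR] at hq1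
      nlinarith
    · nlinarith [mul_nonneg (sub_nonneg.mpr hvL2) haR,
        mul_nonneg (sub_nonneg.mpr hvL2) hbR.le]
end
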